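/- Assume b²/(27c) < a < b²/(24c) (so that b² − 24ac > 0). Then: (i) F_b(Q) > 0 for every nonzero Q ∈ 𝒬, so Q = 0 is the strict global minimizer of F_b on 𝒬; (ii) for each unit vector n ∈ ℝ³, s₊ (n nᵀ − I/3) is a local minimizer of F_b on 𝒬 with F_b(s₊ (n nᵀ − I/3)) > 0; (iii) for any unit vector n, s₋ (n nᵀ − I/3) is not a local minimizer of F_b on 𝒬. -/

import Mathlib

open Real

noncomputable section

abbrev Mat3 : Type := Matrix (Fin 3) (Fin 3) ℝ

/-- The space 𝒬 of real symmetric traceless 3×3 matrices. -/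
def QSet : Set Mat3 := {Q | Q.IsSymm ∧ Q.trace = 0}

/-- The Landau–de Gennes bulk energy
`F_b(Q) = (a/2) tr(Q²) − (b/3) tr(Q³) + (c/4) (tr(Q²))²`. -/
noncomputable def Fb (a b c : ℝ) (Q : Mat3) : ℝ :=
  a / 2 * (Q * Q).trace - b / 3 * (Q * Q * Q).trace + c / 4 * ((Q * Q).trace) ^ 2

/-- The uniaxial tensor `s (n nᵀ − I/3)`. -/
noncomputable def uniQ (s : ℝ) (n : Fin 3 → ℝ) : Mat3 :=
  s • (Matrix.vecMulVec n n - (1 / 3 : ℝ) • (1 : Mat3))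

/-- `s₊ = (b + √(b² − 24ac))/(4c)`. -/
noncomputable def splus (a b c : ℝ) : ℝ := (b + Real.sqrt (b ^ 2 - 24 * a * c)) / (4 * c)

/-- `s₋ = (b − √(b² − 24ac))/(4c)`. -/
noncomputable def sminus (a b c : ℝ) : ℝ := (b - Real.sqrt (b ^ 2 - 24 * a * c)) / (4 * c)

/-!
The eigenvalues of a traceless symmetric `Q` sum to zero, which forces
`6 (tr Q³)² ≤ (tr Q²)³`, with equality on uniaxial tensors. Writing `tr Q² = 2 s² / 3` with
`s ≥ 0`, this gives `F_b(Q) ≥ u(s)`, where `u(s) = a s²/3 − 2 b s³/27 + c s⁴/9` is the energy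
of `s (n nᵀ − I/3)`. For `b² < 27ac` the quartic `u` is positive away from `0`, and `s₊`, `s₋`
are its nonzero critical points: a strict local minimum and a strict local maximum. As `s`
depends continuously on `Q`, the local minimality of `u` at `s₊` transfers to `F_b`, while
along the uniaxial line `t ↦ t (n nᵀ − I/3)` the energy is `u(t)`, so `s₋` is not a local
minimizer.
-/

open Matrix

theorem Matrix.IsHermitian.trace_pow_eq_sum_eigenvalues_pow {𝕜 n : Type*} [RCLike 𝕜]
    [Fintype n] [DecidableEq n] {A : Matrix n n 𝕜} (hA : A.IsHermitian) (k : ℕ) :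
    (A ^ k).trace = ∑ i, (hA.eigenvalues i : 𝕜) ^ k := by
  conv_lhs => rw [hA.spectral_theorem, ← map_pow, diagonal_pow, Unitary.conjStarAlgAut_apply,
    trace_mul_cycle, Unitary.coe_star_mul_self, one_mul, trace_diagonal]
  rfl

section Symmetric

variable {n : Type*} [Fintype n] [DecidableEq n] {Q : Matrix n n ℝ}

theorem Matrix.IsSymm.trace_sq_nonneg (hQ : Q.IsSymm) : 0 ≤ (Q ^ 2).trace := by
  have h := (posSemidef_conjTranspose_mul_self Q).trace_nonneg
  rwa [isHermitian_iff_isSymm.mpr hQ, ← sq] at h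

theorem Matrix.IsSymm.trace_sq_pos (hQ : Q.IsSymm) (h : Q ≠ 0) : 0 < (Q ^ 2).trace := by
  have h' := trace_conjTranspose_mul_self_eq_zero_iff.not.mpr h
  rw [isHermitian_iff_isSymm.mpr hQ, ← sq] at h'
  exact hQ.trace_sq_nonneg.lt_of_ne' h'

end Symmetric

theorem sq_trace_pow_three_le {Q : Mat3} (hQ : Q.IsSymm) (htr : Q.trace = 0) :
    6 * (Q ^ 3).trace ^ 2 ≤ (Q ^ 2).trace ^ 3 := by
  have hQH := isHermitian_iff_isSymm.mpr hQ
  have htr' := hQH.trace_pow_eq_sum_eigenvalues_pow 1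
  have h2 := hQH.trace_pow_eq_sum_eigenvalues_pow 2
  have h3 := hQH.trace_pow_eq_sum_eigenvalues_pow 3
  simp only [pow_one, Fin.sum_univ_three, RCLike.ofReal_real_eq_id, id] at htr' h2 h3
  set x := hQH.eigenvalues 0
  set y := hQH.eigenvalues 1
  have hz : hQH.eigenvalues 2 = -x - y := by linarith
  rw [h2, h3, hz]
  -- `(tr Q²)³ - 6 (tr Q³)²` is twice the discriminant of the characteristic polynomial
  linear_combination 2 * sq_nonneg ((x - y) * (2 * x + y) * (x + 2 * y))

/-- The scalar order parameter, normalised so that `orderParam (uniQ s n) = |s|`. -/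
def orderParam (Q : Mat3) : ℝ := √(3 / 2 * (Q ^ 2).trace)

def uniaxialEnergy (a b c s : ℝ) : ℝ := a / 3 * s ^ 2 - 2 * b / 27 * s ^ 3 + c / 9 * s ^ 4

theorem continuous_orderParam : Continuous orderParam := by
  unfold orderParam
  fun_prop

theorem sq_orderParam {Q : Mat3} (hQ : Q.IsSymm) : orderParam Q ^ 2 = 3 / 2 * (Q ^ 2).trace :=
  Real.sq_sqrt (by linarith [hQ.trace_sq_nonneg])

theorem orderParam_pos {Q : Mat3} (hQ : Q.IsSymm) (h : Q ≠ 0) : 0 < orderParam Q :=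
  Real.sqrt_pos.mpr (by linarith [hQ.trace_sq_pos h])

theorem trace_pow_three_le_orderParam {Q : Mat3} (hQ : Q ∈ QSet) :
    (Q ^ 3).trace ≤ 2 / 9 * orderParam Q ^ 3 := by
  have hsq := sq_orderParam hQ.1
  have hle : (Q ^ 3).trace ^ 2 ≤ (2 / 9 * orderParam Q ^ 3) ^ 2 := by
    have := sq_trace_pow_three_le hQ.1 hQ.2
    have hp : (Q ^ 2).trace = 2 / 3 * orderParam Q ^ 2 := by linarith
    rw [hp] at this
    linear_combination this / 6
  exact (abs_le_of_sq_le_sq' hle (by unfold orderParam; positivity)).2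

theorem Fb_eq_trace_pow (a b c : ℝ) (Q : Mat3) :
    Fb a b c Q = a / 2 * (Q ^ 2).trace - b / 3 * (Q ^ 3).trace + c / 4 * (Q ^ 2).trace ^ 2 := by
  rw [sq Q, pow_three' Q]
  rfl

theorem uniaxialEnergy_orderParam_le_Fb {a b : ℝ} (c : ℝ) (hb : 0 ≤ b) {Q : Mat3}
    (hQ : Q ∈ QSet) : uniaxialEnergy a b c (orderParam Q) ≤ Fb a b c Q := by
  have hp : (Q ^ 2).trace = 2 / 3 * orderParam Q ^ 2 := by linarith [sq_orderParam hQ.1]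
  have hq := mul_le_mul_of_nonneg_left (trace_pow_three_le_orderParam hQ) hb
  rw [Fb_eq_trace_pow, hp, uniaxialEnergy]
  linarith

section Uniaxial

variable {n : Fin 3 → ℝ} (hn : n ⬝ᵥ n = 1)
include hn

theorem vecMulVec_self_mul_self : vecMulVec n n * vecMulVec n n = vecMulVec n n := by
  rw [vecMulVec_mul_vecMulVec, hn, one_smul]

theorem uniQ_mem_QSet (s : ℝ) : uniQ s n ∈ QSet := by
  refine ⟨?_, ?_⟩
  · exact (IsSymm.sub (transpose_vecMulVec n n) (isSymm_one.smul _)).smul s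
  · simp [uniQ, hn]

theorem trace_uniQ_sq (s : ℝ) : (uniQ s n ^ 2).trace = 2 / 3 * s ^ 2 := by
  have h : (vecMulVec n n - (1 / 3 : ℝ) • (1 : Mat3)) ^ 2 =
      (1 / 3 : ℝ) • vecMulVec n n + (1 / 9 : ℝ) • 1 := by
    simp only [sq, sub_mul, mul_sub, smul_mul_assoc, mul_smul_comm, one_mul, mul_one,
      vecMulVec_self_mul_self hn]
    module
  rw [uniQ, smul_pow, h]
  simp [hn]
  ring

theorem trace_uniQ_pow_three (s : ℝ) : (uniQ s n ^ 3).trace = 2 / 9 * s ^ 3 := by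
  have h : (vecMulVec n n - (1 / 3 : ℝ) • (1 : Mat3)) ^ 3 =
      (1 / 3 : ℝ) • vecMulVec n n - (1 / 27 : ℝ) • 1 := by
    simp only [pow_three, sub_mul, mul_sub, smul_mul_assoc, mul_smul_comm, one_mul, mul_one,
      vecMulVec_self_mul_self hn, smul_smul, smul_sub]
    module
  rw [uniQ, smul_pow, h]
  simp [hn]
  ring

theorem Fb_uniQ (a b c s : ℝ) : Fb a b c (uniQ s n) = uniaxialEnergy a b c s := by
  rw [Fb_eq_trace_pow, trace_uniQ_sq hn, trace_uniQ_pow_three hn, uniaxialEnergy]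
  ring

theorem orderParam_uniQ {s : ℝ} (hs : 0 ≤ s) : orderParam (uniQ s n) = s := by
  rw [orderParam, trace_uniQ_sq hn, show 3 / 2 * (2 / 3 * s ^ 2) = s ^ 2 by ring,
    Real.sqrt_sq hs]

end Uniaxial

theorem continuous_uniQ (n : Fin 3 → ℝ) : Continuous fun s => uniQ s n := by
  unfold uniQ
  fun_prop

section SecondOrder

variable {f R : ℝ → ℝ} {x₀ : ℝ}

theorem isLocalMin_of_sub_eq_sq_mul (hf : ∀ x, f x - f x₀ = (x - x₀) ^ 2 * R x)
    (hR : ContinuousAt R x₀) (hR₀ : 0 < R x₀) : IsLocalMin f x₀ := by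
  filter_upwards [hR.eventually (eventually_gt_nhds hR₀)] with x hx
  nlinarith [hf x, mul_nonneg (sq_nonneg (x - x₀)) hx.le]

theorem not_isLocalMin_of_sub_eq_sq_mul (hf : ∀ x, f x - f x₀ = (x - x₀) ^ 2 * R x)
    (hR : ContinuousAt R x₀) (hR₀ : R x₀ < 0) : ¬ IsLocalMin f x₀ := by
  intro hmin
  have hnear := (hmin.and (hR.eventually (eventually_lt_nhds hR₀))).filter_mono
    (nhdsWithin_le_nhds (s := {x₀}ᶜ))
  obtain ⟨x, ⟨hfx, hRx⟩, hx⟩ := (hnear.and self_mem_nhdsWithin).exists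
  have hpos : 0 < (x - x₀) ^ 2 := by
    have : x - x₀ ≠ 0 := sub_ne_zero.mpr hx
    positivity
  nlinarith [hf x, mul_neg_of_pos_of_neg hpos hRx]

end SecondOrder

theorem uniaxialEnergy_pos {a b c s : ℝ} (hc : 0 < c) (h : b ^ 2 < 27 * a * c) (hs : s ≠ 0) :
    0 < uniaxialEnergy a b c s := by
  have hq : 0 < 3 * c * s ^ 2 - 2 * b * s + 9 * a := by
    nlinarith [sq_nonneg (3 * c * s - b)]
  have : uniaxialEnergy a b c s = s ^ 2 * (3 * c * s ^ 2 - 2 * b * s + 9 * a) / 27 := by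
    rw [uniaxialEnergy]
    ring
  rw [this]
  positivity

section Critical

-- `deriv (uniaxialEnergy a b c) s = 2 * s / 9 * (2 * c * s ^ 2 - b * s + 3 * a)`
variable {a b c s₀ : ℝ} (h₀ : 2 * c * s₀ ^ 2 - b * s₀ + 3 * a = 0)
include h₀

theorem uniaxialEnergy_sub_uniaxialEnergy (s : ℝ) :
    uniaxialEnergy a b c s - uniaxialEnergy a b c s₀ =
      (s - s₀) ^ 2 * ((3 * c * s ^ 2 + (6 * c * s₀ - 2 * b) * s
        + (9 * a - 4 * b * s₀ + 9 * c * s₀ ^ 2)) / 27) := by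
  rw [uniaxialEnergy, uniaxialEnergy]
  linear_combination (2 * s₀ * (s - s₀) / 9) * h₀

theorem isLocalMin_uniaxialEnergy (h : 6 * a < b * s₀) : IsLocalMin (uniaxialEnergy a b c) s₀ :=
  isLocalMin_of_sub_eq_sq_mul (uniaxialEnergy_sub_uniaxialEnergy h₀) (by fun_prop)
    (by linarith)

theorem not_isLocalMin_uniaxialEnergy (h : b * s₀ < 6 * a) :
    ¬ IsLocalMin (uniaxialEnergy a b c) s₀ :=
  not_isLocalMin_of_sub_eq_sq_mul (uniaxialEnergy_sub_uniaxialEnergy h₀) (by fun_prop)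
    (by linarith)

end Critical

section Roots

variable {a b c : ℝ}

theorem quadratic_splus_eq_zero (hc : c ≠ 0) (hD : 0 ≤ b ^ 2 - 24 * a * c) :
    2 * c * splus a b c ^ 2 - b * splus a b c + 3 * a = 0 := by
  have hd := Real.sq_sqrt hD
  rw [splus]
  generalize √(b ^ 2 - 24 * a * c) = d at hd ⊢
  field_simp
  linear_combination 2 * hd

theorem quadratic_sminus_eq_zero (hc : c ≠ 0) (hD : 0 ≤ b ^ 2 - 24 * a * c) :
    2 * c * sminus a b c ^ 2 - b * sminus a b c + 3 * a = 0 := by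
  have hd := Real.sq_sqrt hD
  rw [sminus]
  generalize √(b ^ 2 - 24 * a * c) = d at hd ⊢
  field_simp
  linear_combination 2 * hd

theorem splus_pos (hb : 0 < b) (hc : 0 < c) : 0 < splus a b c := by
  rw [splus]
  positivity

theorem six_mul_lt_mul_splus (hb : 0 ≤ b) (hc : 0 < c) (hD : 24 * a * c < b ^ 2) :
    6 * a < b * splus a b c := by
  have hd := Real.sq_sqrt (sub_nonneg.mpr hD.le)
  have hd₀ := Real.sqrt_pos.mpr (sub_pos.mpr hD)
  rw [splus, mul_div_assoc', lt_div_iff₀ (by positivity)]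
  nlinarith [mul_nonneg hb hd₀.le]

theorem mul_sminus_lt_six_mul (ha : 0 < a) (hb : 0 < b) (hc : 0 < c) (hD : 24 * a * c < b ^ 2) :
    b * sminus a b c < 6 * a := by
  have hd := Real.sq_sqrt (sub_nonneg.mpr hD.le)
  have hd₀ := Real.sqrt_pos.mpr (sub_pos.mpr hD)
  have hdb : √(b ^ 2 - 24 * a * c) < b := by
    rw [Real.sqrt_lt' hb]
    nlinarith [mul_pos ha hc]
  rw [sminus, mul_div_assoc', div_lt_iff₀ (by positivity)]
  nlinarith [mul_pos hd₀ (sub_pos.mpr hdb)]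

end Roots

theorem IsLocalMin.isLocalMinOn_of_comp_le {X Y β : Type*} [TopologicalSpace X]
    [TopologicalSpace Y] [Preorder β] {F : X → β} {g : Y → β} {σ : X → Y} {S : Set X} {x₀ : X}
    (hg : IsLocalMin g (σ x₀)) (hσ : ContinuousAt σ x₀) (hle : ∀ x ∈ S, g (σ x) ≤ F x)
    (heq : F x₀ = g (σ x₀)) :
    IsLocalMinOn F S x₀ := by
  filter_upwards [nhdsWithin_le_nhds (hg.comp_continuous hσ), self_mem_nhdsWithin] with x hx hxS
  exact heq ▸ hx.trans (hle x hxS)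

/-- For `b²/(27c) < a < b²/(24c)`: (i) `F_b(Q) > 0` for every nonzero `Q ∈ 𝒬`, so `Q = 0`
is the strict global minimizer; (ii) each `s₊ (n nᵀ − I/3)` is a local minimizer of `F_b`
on 𝒬 with strictly positive energy; (iii) no `s₋ (n nᵀ − I/3)` is a local minimizer of
`F_b` on 𝒬. -/
theorem stmt11 (a b c : ℝ) (hb : 0 < b) (hc : 0 < c)
    (ha1 : b ^ 2 / (27 * c) < a) (ha2 : a < b ^ 2 / (24 * c)) :
    (∀ Q ∈ QSet, Q ≠ 0 → 0 < Fb a b c Q) ∧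
    (∀ n : Fin 3 → ℝ, (∑ i, (n i) ^ 2 = 1) →
      IsLocalMinOn (Fb a b c) QSet (uniQ (splus a b c) n) ∧
      0 < Fb a b c (uniQ (splus a b c) n)) ∧
    (∀ n : Fin 3 → ℝ, (∑ i, (n i) ^ 2 = 1) →
      ¬ IsLocalMinOn (Fb a b c) QSet (uniQ (sminus a b c) n)) := by
  have ha : 0 < a := lt_trans (by positivity) ha1
  have h27 : b ^ 2 < 27 * a * c := by rw [div_lt_iff₀ (by positivity)] at ha1; linarith
  have h24 : 24 * a * c < b ^ 2 := by rw [lt_div_iff₀ (by positivity)] at ha2; linarith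
  have hD : 0 ≤ b ^ 2 - 24 * a * c := by linarith
  have hunit : ∀ n : Fin 3 → ℝ, ∑ i, n i ^ 2 = 1 → n ⬝ᵥ n = 1 := fun n hn => by
    simpa [dotProduct, sq] using hn
  refine ⟨fun Q hQ hQ₀ => ?_, fun n hn => ⟨?_, ?_⟩, fun n hn hmin => ?_⟩
  · exact (uniaxialEnergy_pos hc h27 (orderParam_pos hQ.1 hQ₀).ne').trans_le
      (uniaxialEnergy_orderParam_le_Fb c hb.le hQ)
  · have hsplus := (splus_pos (a := a) hb hc).le
    refine IsLocalMin.isLocalMinOn_of_comp_le (σ := orderParam) ?_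
      continuous_orderParam.continuousAt (fun Q hQ => uniaxialEnergy_orderParam_le_Fb c hb.le hQ) ?_
    · rw [orderParam_uniQ (hunit n hn) hsplus]
      exact isLocalMin_uniaxialEnergy (quadratic_splus_eq_zero hc.ne' hD)
        (six_mul_lt_mul_splus hb.le hc h24)
    · rw [orderParam_uniQ (hunit n hn) hsplus, Fb_uniQ (hunit n hn)]
  · rw [Fb_uniQ (hunit n hn)]
    exact uniaxialEnergy_pos hc h27 (splus_pos hb hc).ne'
  · have hcurve := hmin.comp_continuousOn (g := fun s => uniQ s n)
      (fun s _ => uniQ_mem_QSet (hunit n hn) s) (continuous_uniQ n).continuousOn (Set.mem_univ _)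
    rw [isLocalMinOn_univ_iff] at hcurve
    refine not_isLocalMin_uniaxialEnergy (quadratic_sminus_eq_zero hc.ne' hD)
      (mul_sminus_lt_six_mul ha hb hc h24) ?_
    convert hcurve using 1
    funext s
    exact (Fb_uniQ (hunit n hn) a b c s).symm
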